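/- Objective-function sensitivity with a fixed basis: let (p, A, b) be an m×n LP problem whose columns can be split as A = (B | E) with B an invertible m×m submatrix, such that x = (x_B, x_E) = (B⁻¹b, 0) is feasible and the dual slacks are strictly positive on the nonbasic columns: p_Bᵀ B⁻¹ E ≫ p_Eᵀ (strict inequality in every coordinate), where p = (p_B, p_E); thus x ∈ S(p, A, b). Let Δp ∈ ℝ^n be nonzero, Δp = (Δp_B, Δp_E). Then there exist real numbers θ₋ < 0 < θ₊ such that for every θ ∈ [θ₋, θ₊], x ∈ S(p + θΔp, A, b) and V(p + θΔp, A, b) = V(p, A, b) + θ · Δp_Bᵀ B⁻¹ b; in particular V is an affine function of θ on this interval. -/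

import Mathlib

open Matrix

/-- The feasible set of the LP problem (p, A, b) with basic columns Fin m and nonbasic
columns Fin k: maximize pᵀx s.t. Ax = b, x ≥ 0. -/
def Feas {m k : ℕ} (A : Matrix (Fin m) (Fin m ⊕ Fin k) ℝ) (b : Fin m → ℝ) :
    Set (Fin m ⊕ Fin k → ℝ) :=
  {x | (∀ j, 0 ≤ x j) ∧ A.mulVec x = b}

/-- The set of optimal solutions of the LP problem (p, A, b). -/
def Sol {m k : ℕ} (p : Fin m ⊕ Fin k → ℝ) (A : Matrix (Fin m) (Fin m ⊕ Fin k) ℝ)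
    (b : Fin m → ℝ) : Set (Fin m ⊕ Fin k → ℝ) :=
  {x ∈ Feas A b | ∀ x' ∈ Feas A b, p ⬝ᵥ x' ≤ p ⬝ᵥ x}

lemma dot_sum_split {m k : ℕ} (q v : Fin m ⊕ Fin k → ℝ) :
    q ⬝ᵥ v = (fun i => q (Sum.inl i)) ⬝ᵥ (fun i => v (Sum.inl i))
      + ∑ j : Fin k, q (Sum.inr j) * v (Sum.inr j) := by
  simp [dotProduct, Fintype.sum_sum_type]

lemma dot_mulVec_eq_sum {m k : ℕ} (y : Fin m → ℝ) (E : Matrix (Fin m) (Fin k) ℝ)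
    (v : Fin k → ℝ) :
    y ⬝ᵥ E.mulVec v = ∑ j, (y ⬝ᵥ fun i => E i j) * v j := by
  simp only [dotProduct, Matrix.mulVec, Finset.mul_sum, Finset.sum_mul]
  rw [Finset.sum_comm]
  exact Finset.sum_congr rfl fun j _ => Finset.sum_congr rfl fun i _ => by ring

/-- Objective-function sensitivity with a fixed basis: columns are split as A = (B | E)
(basic block indexed by Fin m, nonbasic block by Fin k), B invertible,
x = (x_B, x_E) = (B⁻¹b, 0) feasible, and the dual slacks strictly positive on nonbasic
columns: p_Bᵀ B⁻¹ E ≫ p_Eᵀ (so x ∈ S(p, A, b)). Then for any nonzero Δp there are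
θ₋ < 0 < θ₊ such that for all θ ∈ [θ₋, θ₊], x ∈ S(p + θΔp, A, b) and
V(p + θΔp, A, b) = V(p, A, b) + θ · Δp_Bᵀ B⁻¹ b: V is affine in θ on this interval. -/
theorem objective_sensitivity {m k : ℕ}
    (p : Fin m ⊕ Fin k → ℝ) (A : Matrix (Fin m) (Fin m ⊕ Fin k) ℝ) (b : Fin m → ℝ)
    (B : Matrix (Fin m) (Fin m) ℝ) (hBdef : B = fun i j => A i (Sum.inl j))
    (hBinv : IsUnit B.det)
    (x : Fin m ⊕ Fin k → ℝ) (hxdef : x = Sum.elim (B⁻¹.mulVec b) 0)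
    (hfeas : x ∈ Feas A b)
    (hslack : ∀ j : Fin k,
      p (Sum.inr j) < (B⁻¹)ᵀ.mulVec (fun i => p (Sum.inl i)) ⬝ᵥ fun i => A i (Sum.inr j))
    (Δp : Fin m ⊕ Fin k → ℝ) (hΔp : Δp ≠ 0) :
    ∃ θm θp : ℝ, θm < 0 ∧ 0 < θp ∧
      ∀ θ ∈ Set.Icc θm θp,
        x ∈ Sol (p + θ • Δp) A b ∧
        (p + θ • Δp) ⬝ᵥ x = p ⬝ᵥ x + θ * ((fun i => Δp (Sum.inl i)) ⬝ᵥ B⁻¹.mulVec b) := by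
  classical
  set E : Matrix (Fin m) (Fin k) ℝ := fun i j => A i (Sum.inr j) with hE
  have hsplit : ∀ v : Fin m ⊕ Fin k → ℝ,
      A.mulVec v = B.mulVec (fun i => v (Sum.inl i)) + E.mulVec (fun j => v (Sum.inr j)) := by
    intro v; funext i
    simp [Matrix.mulVec, dotProduct, Fintype.sum_sum_type, hE, hBdef]
  -- dot product of any q with x
  have hxdot : ∀ q : Fin m ⊕ Fin k → ℝ,
      q ⬝ᵥ x = (fun i => q (Sum.inl i)) ⬝ᵥ B⁻¹.mulVec b := by
    intro q
    rw [dot_sum_split, hxdef]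
    simp
  -- key optimality bound
  have key : ∀ q : Fin m ⊕ Fin k → ℝ,
      (∀ j, q (Sum.inr j) ≤ (B⁻¹)ᵀ.mulVec (fun i => q (Sum.inl i)) ⬝ᵥ fun i => E i j) →
      ∀ x' ∈ Feas A b, q ⬝ᵥ x' ≤ q ⬝ᵥ x := by
    intro q hq x' hx'
    obtain ⟨hx'nn, hx'eq⟩ := hx'
    set qB : Fin m → ℝ := fun i => q (Sum.inl i) with hqB
    set xB : Fin m → ℝ := fun i => x' (Sum.inl i) with hxB
    set xE : Fin k → ℝ := fun j => x' (Sum.inr j) with hxE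
    have hb : B.mulVec xB + E.mulVec xE = b := by rw [← hsplit]; exact hx'eq
    have hrec : B⁻¹.mulVec b = xB + B⁻¹.mulVec (E.mulVec xE) := by
      rw [← hb, Matrix.mulVec_add, Matrix.mulVec_mulVec,
        Matrix.nonsing_inv_mul B hBinv, Matrix.one_mulVec]
    have hy : ∀ w : Fin m → ℝ, qB ⬝ᵥ B⁻¹.mulVec w = (B⁻¹)ᵀ.mulVec qB ⬝ᵥ w := by
      intro w
      rw [Matrix.dotProduct_mulVec, Matrix.mulVec_transpose]
    have h1 : q ⬝ᵥ x = qB ⬝ᵥ xB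
        + ∑ j, ((B⁻¹)ᵀ.mulVec qB ⬝ᵥ fun i => E i j) * xE j := by
      rw [hxdot q, hrec, dotProduct_add, hy, dot_mulVec_eq_sum]
    rw [dot_sum_split q x', h1]
    refine add_le_add le_rfl ?_
    apply Finset.sum_le_sum
    intro j _
    exact mul_le_mul_of_nonneg_right (hq j) (hx'nn (Sum.inr j))
  -- slack quantities
  set s : Fin k → ℝ := fun j =>
    ((B⁻¹)ᵀ.mulVec (fun i => p (Sum.inl i)) ⬝ᵥ fun i => E i j) - p (Sum.inr j) with hs
  set d : Fin k → ℝ := fun j =>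
    ((B⁻¹)ᵀ.mulVec (fun i => Δp (Sum.inl i)) ⬝ᵥ fun i => E i j) - Δp (Sum.inr j) with hd
  have hspos : ∀ j, 0 < s j := fun j => sub_pos.mpr (hslack j)
  set f : Fin k → ℝ := fun j => s j / (|d j| + 1) with hf
  have hfpos : ∀ j, 0 < f j := fun j =>
    div_pos (hspos j) (by positivity)
  set T : Finset ℝ := insert 1 (Finset.image f Finset.univ) with hT
  have hTne : T.Nonempty := ⟨1, Finset.mem_insert_self 1 _⟩
  set ε : ℝ := T.min' hTne with hε
  have hεpos : 0 < ε := by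
    rw [hε, Finset.lt_min'_iff]
    intro y hy
    rw [hT, Finset.mem_insert] at hy
    rcases hy with h | h
    · simp [h]
    · obtain ⟨j, _, rfl⟩ := Finset.mem_image.mp h
      exact hfpos j
  have hεle : ∀ j, ε ≤ f j := fun j =>
    Finset.min'_le _ _ (Finset.mem_insert_of_mem (Finset.mem_image_of_mem f (Finset.mem_univ j)))
  refine ⟨-ε, ε, neg_neg_iff_pos.mpr hεpos, hεpos, ?_⟩
  intro θ hθ
  have hθabs : |θ| ≤ ε := abs_le.mpr ⟨hθ.1, hθ.2⟩
  -- nonneg slack for p + θ • Δp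
  have hq : ∀ j, (p + θ • Δp) (Sum.inr j) ≤
      (B⁻¹)ᵀ.mulVec (fun i => (p + θ • Δp) (Sum.inl i)) ⬝ᵥ fun i => E i j := by
    intro j
    have hfun : (fun i => (p + θ • Δp) (Sum.inl i))
        = (fun i => p (Sum.inl i)) + θ • fun i => Δp (Sum.inl i) := by
      funext i; simp
    have hlin : (B⁻¹)ᵀ.mulVec (fun i => (p + θ • Δp) (Sum.inl i)) ⬝ᵥ (fun i => E i j)
        = ((B⁻¹)ᵀ.mulVec (fun i => p (Sum.inl i)) ⬝ᵥ fun i => E i j)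
          + θ * ((B⁻¹)ᵀ.mulVec (fun i => Δp (Sum.inl i)) ⬝ᵥ fun i => E i j) := by
      rw [hfun, Matrix.mulVec_add, Matrix.mulVec_smul, add_dotProduct,
        smul_dotProduct, smul_eq_mul]
    have h2 : 0 ≤ s j + θ * d j := by
      have h3 : ε * (|d j| + 1) ≤ s j := by
        have := hεle j
        rw [hf] at this
        rw [← le_div_iff₀ (by positivity)]
        exact this
      have h4 : -(|θ| * |d j|) ≤ θ * d j := by
        rw [← abs_mul]
        exact neg_abs_le _
      nlinarith [abs_nonneg (d j), abs_nonneg θ, hεpos]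
    have h5 := h2
    rw [hs, hd] at h5
    simp only at h5
    rw [hlin]
    simp only [Pi.add_apply, Pi.smul_apply, smul_eq_mul]
    linarith
  constructor
  · refine ⟨hfeas, ?_⟩
    exact key (p + θ • Δp) hq
  · rw [add_dotProduct, smul_dotProduct, smul_eq_mul, hxdot Δp]
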